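/- arXiv:2310.09428 — 3 statements merged into one kernel-verified Lean document; each statement's English description precedes it below -/
import Mathlib

section
/- Let T in R^{d_1 x d_2 x d_3} be an orthogonally decomposable tensor, T = sum_{r=1}^R theta_r (u_{1r} o u_{2r} o u_{3r}), where theta_r > 0, each u_{mr} in R^{d_m} is a unit vector, and u_{mr}^T u_{ms} = 0 for r != s and each mode m in {1,2,3}. Then the spectral norm of T equals the largest weight: max over unit vectors s_1 in R^{d_1}, s_2 in R^{d_2}, s_3 in R^{d_3} of sum_{i,j,k} T_{ijk} s_{1,i} s_{2,j} s_{3,k} = max_{r in [R]} theta_r. -/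
lemma bessel_aux {d R : ℕ} (u : Fin R → Fin d → ℝ)
    (hu : ∀ r, ∑ i, u r i ^ 2 = 1)
    (ho : ∀ r s, r ≠ s → ∑ i, u r i * u s i = 0)
    (v : Fin d → ℝ) (hv : ∑ i, v i ^ 2 = 1) :
    ∑ r, (∑ i, u r i * v i) ^ 2 ≤ 1 := by
  set a : Fin R → ℝ := fun r => ∑ i, u r i * v i with ha
  have P2 : ∑ i, v i * (∑ r, a r * u r i) = ∑ r, a r ^ 2 := by
    calc ∑ i, v i * (∑ r, a r * u r i)
        = ∑ i, ∑ r, a r * (u r i * v i) := by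
          refine Finset.sum_congr rfl fun i _ => ?_
          rw [Finset.mul_sum]
          exact Finset.sum_congr rfl fun r _ => by ring
      _ = ∑ r, ∑ i, a r * (u r i * v i) := Finset.sum_comm
      _ = ∑ r, a r * (∑ i, u r i * v i) := by
          exact Finset.sum_congr rfl fun r _ => (Finset.mul_sum _ _ _).symm
      _ = ∑ r, a r ^ 2 := by
          refine Finset.sum_congr rfl fun r _ => ?_
          have h : ∑ i, u r i * v i = a r := rfl
          rw [h, sq]
  have P3 : ∑ i, (∑ r, a r * u r i) ^ 2 = ∑ r, a r ^ 2 := by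
    calc ∑ i, (∑ r, a r * u r i) ^ 2
        = ∑ i, ∑ r, ∑ t, (a r * u r i) * (a t * u t i) := by
          refine Finset.sum_congr rfl fun i _ => ?_
          rw [sq, Finset.sum_mul_sum]
      _ = ∑ r, ∑ t, ∑ i, (a r * u r i) * (a t * u t i) := by
          rw [Finset.sum_comm]
          exact Finset.sum_congr rfl fun r _ => Finset.sum_comm
      _ = ∑ r, ∑ t, a r * a t * ∑ i, u r i * u t i := by
          refine Finset.sum_congr rfl fun r _ => Finset.sum_congr rfl fun t _ => ?_
          rw [Finset.mul_sum]
          exact Finset.sum_congr rfl fun i _ => by ring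
      _ = ∑ r, a r ^ 2 := by
          refine Finset.sum_congr rfl fun r _ => ?_
          rw [Finset.sum_eq_single r]
          · have : ∑ i, u r i * u r i = 1 := by simpa [sq] using hu r
            rw [this]; ring
          · intro t _ htr
            rw [ho r t (Ne.symm htr), mul_zero]
          · intro h; exact absurd (Finset.mem_univ r) h
  have key : ∑ i, (v i - ∑ r, a r * u r i) ^ 2 = 1 - ∑ r, a r ^ 2 := by
    calc ∑ i, (v i - ∑ r, a r * u r i) ^ 2
        = ∑ i, (v i ^ 2 - 2 * (v i * (∑ r, a r * u r i)) + (∑ r, a r * u r i) ^ 2) := by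
          exact Finset.sum_congr rfl fun i _ => by ring
      _ = ∑ i, v i ^ 2 - 2 * ∑ i, (v i * (∑ r, a r * u r i)) + ∑ i, (∑ r, a r * u r i) ^ 2 := by
          rw [Finset.sum_add_distrib, Finset.sum_sub_distrib, Finset.mul_sum]
      _ = 1 - ∑ r, a r ^ 2 := by rw [hv, P2, P3]; ring
  have h0 : 0 ≤ ∑ i, (v i - ∑ r, a r * u r i) ^ 2 :=
    Finset.sum_nonneg fun i _ => sq_nonneg _
  linarith [key ▸ h0]

/-- The spectral norm of an orthogonally decomposable (odeco) tensor
`T = ∑_r θ_r (u_{1r} ∘ u_{2r} ∘ u_{3r})` equals its largest weight: the maximum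
of the trilinear form `∑_{ijk} T_{ijk} s_{1,i} s_{2,j} s_{3,k}` over unit
vectors `s₁, s₂, s₃` is attained and equals `max_r θ_r`. -/
theorem stmt_3 {d1 d2 d3 R : ℕ} (hR : 0 < R)
    (θ : Fin R → ℝ) (hθ : ∀ r, 0 < θ r)
    (u1 : Fin R → Fin d1 → ℝ) (u2 : Fin R → Fin d2 → ℝ) (u3 : Fin R → Fin d3 → ℝ)
    (hu1 : ∀ r, ∑ i, u1 r i ^ 2 = 1)
    (hu2 : ∀ r, ∑ j, u2 r j ^ 2 = 1)
    (hu3 : ∀ r, ∑ k, u3 r k ^ 2 = 1)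
    (ho1 : ∀ r s, r ≠ s → ∑ i, u1 r i * u1 s i = 0)
    (ho2 : ∀ r s, r ≠ s → ∑ j, u2 r j * u2 s j = 0)
    (ho3 : ∀ r s, r ≠ s → ∑ k, u3 r k * u3 s k = 0)
    (T : Fin d1 → Fin d2 → Fin d3 → ℝ)
    (hT : ∀ i j k, T i j k = ∑ r, θ r * (u1 r i * u2 r j * u3 r k)) :
    IsGreatest
      {val : ℝ | ∃ (s1 : Fin d1 → ℝ) (s2 : Fin d2 → ℝ) (s3 : Fin d3 → ℝ),
        (∑ i, s1 i ^ 2 = 1) ∧ (∑ j, s2 j ^ 2 = 1) ∧ (∑ k, s3 k ^ 2 = 1) ∧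
        val = ∑ i, ∑ j, ∑ k, T i j k * s1 i * s2 j * s3 k}
      (Finset.univ.sup' (Finset.univ_nonempty_iff.mpr (Fin.pos_iff_nonempty.mp hR)) θ) := by
  have hval : ∀ (s1 : Fin d1 → ℝ) (s2 : Fin d2 → ℝ) (s3 : Fin d3 → ℝ),
      ∑ i, ∑ j, ∑ k, T i j k * s1 i * s2 j * s3 k
      = ∑ r, θ r * ((∑ i, u1 r i * s1 i) * (∑ j, u2 r j * s2 j) * (∑ k, u3 r k * s3 k)) := by
    intro s1 s2 s3
    have step : ∀ i j k, T i j k * s1 i * s2 j * s3 k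
        = ∑ r, θ r * (u1 r i * s1 i) * (u2 r j * s2 j) * (u3 r k * s3 k) := by
      intro i j k
      rw [hT, Finset.sum_mul, Finset.sum_mul, Finset.sum_mul]
      exact Finset.sum_congr rfl fun r _ => by ring
    simp only [step]
    have swap : ∑ i, ∑ j, ∑ k, ∑ r, θ r * (u1 r i * s1 i) * (u2 r j * s2 j) * (u3 r k * s3 k)
        = ∑ r, ∑ i, ∑ j, ∑ k, θ r * (u1 r i * s1 i) * (u2 r j * s2 j) * (u3 r k * s3 k) := by
      calc ∑ i, ∑ j, ∑ k, ∑ r, θ r * (u1 r i * s1 i) * (u2 r j * s2 j) * (u3 r k * s3 k)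
          = ∑ i, ∑ j, ∑ r, ∑ k, θ r * (u1 r i * s1 i) * (u2 r j * s2 j) * (u3 r k * s3 k) :=
            Finset.sum_congr rfl fun i _ => Finset.sum_congr rfl fun j _ => Finset.sum_comm
        _ = ∑ i, ∑ r, ∑ j, ∑ k, θ r * (u1 r i * s1 i) * (u2 r j * s2 j) * (u3 r k * s3 k) :=
            Finset.sum_congr rfl fun i _ => Finset.sum_comm
        _ = ∑ r, ∑ i, ∑ j, ∑ k, θ r * (u1 r i * s1 i) * (u2 r j * s2 j) * (u3 r k * s3 k) :=
            Finset.sum_comm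
    rw [swap]
    refine Finset.sum_congr rfl fun r _ => ?_
    have eAB : (∑ i, u1 r i * s1 i) * (∑ j, u2 r j * s2 j)
        = ∑ i, ∑ j, (u1 r i * s1 i) * (u2 r j * s2 j) := Finset.sum_mul_sum _ _ _ _
    have eABC : (∑ i, u1 r i * s1 i) * (∑ j, u2 r j * s2 j) * (∑ k, u3 r k * s3 k)
        = ∑ i, ∑ j, ∑ k, (u1 r i * s1 i) * (u2 r j * s2 j) * (u3 r k * s3 k) := by
      rw [eAB, Finset.sum_mul]
      refine Finset.sum_congr rfl fun i _ => ?_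
      rw [Finset.sum_mul]
      refine Finset.sum_congr rfl fun j _ => ?_
      rw [Finset.mul_sum]
    rw [eABC, Finset.mul_sum]
    refine Finset.sum_congr rfl fun i _ => ?_
    rw [Finset.mul_sum]
    refine Finset.sum_congr rfl fun j _ => ?_
    rw [Finset.mul_sum]
    exact Finset.sum_congr rfl fun k _ => by ring
  constructor
  · obtain ⟨r₀, -, hr₀⟩ := Finset.exists_mem_eq_sup'
      (Finset.univ_nonempty_iff.mpr (Fin.pos_iff_nonempty.mp hR)) θ
    refine ⟨u1 r₀, u2 r₀, u3 r₀, hu1 r₀, hu2 r₀, hu3 r₀, ?_⟩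
    rw [hval (u1 r₀) (u2 r₀) (u3 r₀), hr₀]
    rw [Finset.sum_eq_single r₀]
    · have e1 : ∑ i, u1 r₀ i * u1 r₀ i = 1 := by simpa [sq] using hu1 r₀
      have e2 : ∑ j, u2 r₀ j * u2 r₀ j = 1 := by simpa [sq] using hu2 r₀
      have e3 : ∑ k, u3 r₀ k * u3 r₀ k = 1 := by simpa [sq] using hu3 r₀
      rw [e1, e2, e3]; ring
    · intro t _ ht
      rw [ho1 t r₀ ht, zero_mul, zero_mul, mul_zero]
    · intro h; exact absurd (Finset.mem_univ r₀) h
  · rintro x ⟨s1, s2, s3, hs1, hs2, hs3, rfl⟩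
    rw [hval s1 s2 s3]
    set M := Finset.univ.sup' (Finset.univ_nonempty_iff.mpr (Fin.pos_iff_nonempty.mp hR)) θ with hMdef
    set a : Fin R → ℝ := fun r => ∑ i, u1 r i * s1 i with ha
    set b : Fin R → ℝ := fun r => ∑ j, u2 r j * s2 j with hb
    set c : Fin R → ℝ := fun r => ∑ k, u3 r k * s3 k with hc
    have hb1 : ∑ r, a r ^ 2 ≤ 1 := bessel_aux u1 hu1 ho1 s1 hs1
    have hb2 : ∑ r, b r ^ 2 ≤ 1 := bessel_aux u2 hu2 ho2 s2 hs2
    have hb3 : ∑ r, c r ^ 2 ≤ 1 := bessel_aux u3 hu3 ho3 s3 hs3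
    have hcabs : ∀ r, |c r| ≤ 1 := by
      intro r
      have h1 : (c r) ^ 2 ≤ 1 :=
        le_trans (Finset.single_le_sum (fun t _ => sq_nonneg (c t)) (Finset.mem_univ r)) hb3
      nlinarith [abs_nonneg (c r), sq_abs (c r)]
    have hM : ∀ r, θ r ≤ M := fun r => Finset.le_sup' θ (Finset.mem_univ r)
    have hMpos : 0 < M := lt_of_lt_of_le (hθ ⟨0, hR⟩) (hM ⟨0, hR⟩)
    calc ∑ r, θ r * (a r * b r * c r) ≤ ∑ r, M * (|a r| * |b r|) := by
          refine Finset.sum_le_sum fun r _ => ?_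
          have h1 : a r * b r * c r ≤ |a r| * |b r| * |c r| := by
            calc a r * b r * c r ≤ |a r * b r * c r| := le_abs_self _
              _ = |a r| * |b r| * |c r| := by rw [abs_mul, abs_mul]
          have h2 : |a r| * |b r| * |c r| ≤ |a r| * |b r| :=
            mul_le_of_le_one_right (mul_nonneg (abs_nonneg _) (abs_nonneg _)) (hcabs r)
          calc θ r * (a r * b r * c r) ≤ θ r * (|a r| * |b r|) :=
                mul_le_mul_of_nonneg_left (h1.trans h2) (hθ r).le
            _ ≤ M * (|a r| * |b r|) :=
                mul_le_mul_of_nonneg_right (hM r) (mul_nonneg (abs_nonneg _) (abs_nonneg _))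
      _ = M * ∑ r, |a r| * |b r| := (Finset.mul_sum _ _ _).symm
      _ ≤ M * 1 := by
          refine mul_le_mul_of_nonneg_left ?_ hMpos.le
          have hstep : ∑ r, |a r| * |b r| ≤ ∑ r, ((a r) ^ 2 + (b r) ^ 2) / 2 :=
            Finset.sum_le_sum fun r _ => by
              nlinarith [sq_abs (a r), sq_abs (b r), sq_nonneg (|a r| - |b r|)]
          have hsplit : ∑ r, ((a r) ^ 2 + (b r) ^ 2) / 2
              = ((∑ r, a r ^ 2) + ∑ r, b r ^ 2) / 2 := by
            rw [← Finset.sum_add_distrib, Finset.sum_div]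
          linarith [hstep, hsplit ▸ hstep]
      _ = M := mul_one M
end

section
/- Let gamma_1,...,gamma_l in R^p be mutually orthogonal vectors, sigma_1 != 0, and Sigma_X = Gamma Gamma^T + sigma_1^2 I_p with Gamma = (gamma_1,...,gamma_l). Let T = sum_{r=1}^R theta_r (u_{1r} o u_{2r} o u_{3r}) in R^{p x d_2 x d_3} be orthogonally decomposable (theta_r > 0, unit vectors, orthogonal within each mode), and suppose there are pairwise disjoint subsets S_1,...,S_R of [l] such that u_{1r} lies in the span of {gamma_j : j in S_r} for each r. Set q = u_{11} and c = q^T Sigma_X q (note c >= sigma_1^2 > 0). Then the deflated tensor T' = T - T x_1 (Sigma_X q c^{-1} q^T) equals theta_1 (v o u_{21} o u_{31}) + sum_{r>=2} theta_r (u_{1r} o u_{2r} o u_{3r}), where v = u_{11} - c^{-1} Sigma_X u_{11}, and v is orthogonal to u_{1r} for every r >= 2; in particular T' is orthogonally decomposable (its first-mode component vectors are mutually orthogonal and its mode-2 and mode-3 loading families are unchanged). -/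
/-- The PLS-deflated cross-covariance tensor remains odeco: with
`Σ_X = Γ Γᵀ + σ₁² I`, an odeco tensor `T = ∑_r θ_r (u_{1r} ∘ u_{2r} ∘ u_{3r})`
whose first-mode loadings lie in spans of disjoint blocks of `Γ`, `q = u_{11}`,
`c = qᵀ Σ_X q`, the deflation `T' = T - T ×₁ (Σ_X q c⁻¹ qᵀ)` equals
`θ₁ (v ∘ u_{21} ∘ u_{31}) + ∑_{r≥2} θ_r (u_{1r} ∘ u_{2r} ∘ u_{3r})` with
`v = u_{11} - c⁻¹ Σ_X u_{11}` orthogonal to every `u_{1r}`, `r ≥ 2`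
(and `c ≥ σ₁² > 0`). -/
theorem stmt_8 {p d2 d3 l R : ℕ} (hR : 0 < R)
    (γ : Fin l → Fin p → ℝ)
    (horthγ : ∀ j j', j ≠ j' → ∑ i, γ j i * γ j' i = 0)
    (σ₁ : ℝ) (hσ₁ : σ₁ ≠ 0)
    (Sx : Matrix (Fin p) (Fin p) ℝ)
    (hSx : ∀ a b, Sx a b = (∑ j, γ j a * γ j b) + if a = b then σ₁ ^ 2 else 0)
    (θ : Fin R → ℝ) (hθ : ∀ r, 0 < θ r)
    (u1 : Fin R → Fin p → ℝ) (u2 : Fin R → Fin d2 → ℝ) (u3 : Fin R → Fin d3 → ℝ)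
    (hu1 : ∀ r, ∑ i, u1 r i ^ 2 = 1)
    (hu2 : ∀ r, ∑ j, u2 r j ^ 2 = 1)
    (hu3 : ∀ r, ∑ k, u3 r k ^ 2 = 1)
    (ho1 : ∀ r s, r ≠ s → ∑ i, u1 r i * u1 s i = 0)
    (ho2 : ∀ r s, r ≠ s → ∑ j, u2 r j * u2 s j = 0)
    (ho3 : ∀ r s, r ≠ s → ∑ k, u3 r k * u3 s k = 0)
    (S : Fin R → Set (Fin l))
    (hdisj : ∀ r s, r ≠ s → Disjoint (S r) (S s))
    (hspan : ∀ r, u1 r ∈ Submodule.span ℝ (γ '' S r))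
    (T : Fin p → Fin d2 → Fin d3 → ℝ)
    (hT : ∀ i j k, T i j k = ∑ r, θ r * (u1 r i * u2 r j * u3 r k))
    (q : Fin p → ℝ) (hq : q = u1 ⟨0, hR⟩)
    (c : ℝ) (hc : c = ∑ a, q a * Sx.mulVec q a)
    (v : Fin p → ℝ)
    (hv : v = fun i => u1 ⟨0, hR⟩ i - c⁻¹ * Sx.mulVec (u1 ⟨0, hR⟩) i)
    (T' : Fin p → Fin d2 → Fin d3 → ℝ)
    (hT' : ∀ i j k,
      T' i j k = T i j k - ∑ i', (Sx.mulVec q i * c⁻¹ * q i') * T i' j k) :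
    σ₁ ^ 2 ≤ c ∧
    (∀ i j k, T' i j k
        = θ ⟨0, hR⟩ * (v i * u2 ⟨0, hR⟩ j * u3 ⟨0, hR⟩ k)
          + ∑ r ∈ Finset.univ.filter (fun r => r ≠ ⟨0, hR⟩),
              θ r * (u1 r i * u2 r j * u3 r k)) ∧
    (∀ r : Fin R, r ≠ ⟨0, hR⟩ → ∑ i, v i * u1 r i = 0) := by
    classical
  set r0 : Fin R := ⟨0, hR⟩
  -- key: γ j ⟂ u1 r when j ∉ S r
  have hkey : ∀ r (j : Fin l), j ∉ S r → ∑ i, γ j i * u1 r i = 0 := by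
    intro r j hj
    have hall : ∀ x ∈ Submodule.span ℝ (γ '' S r), ∑ i, γ j i * x i = 0 := by
      intro x hx
      induction hx using Submodule.span_induction with
      | mem x hx =>
          obtain ⟨j', hj', rfl⟩ := hx
          exact horthγ j j' (fun h => hj (h ▸ hj'))
      | zero => simp
      | add x y _ _ hx hy =>
          simp only [Pi.add_apply, mul_add, Finset.sum_add_distrib, hx, hy, add_zero]
      | smul a x _ hx =>
          simp only [Pi.smul_apply, smul_eq_mul, mul_left_comm, ← Finset.mul_sum, hx, mul_zero]
    exact hall _ (hspan r)
  -- quadratic form identity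
  have hform : ∀ x y : Fin p → ℝ,
      ∑ a, x a * Sx.mulVec y a
        = (∑ j, (∑ a, γ j a * x a) * (∑ b, γ j b * y b)) + σ₁ ^ 2 * ∑ a, x a * y a := by
    intro x y
    have h1 : ∀ a, Sx.mulVec y a = (∑ j, γ j a * ∑ b, γ j b * y b) + σ₁ ^ 2 * y a := by
      intro a
      simp only [Matrix.mulVec, dotProduct, hSx, add_mul, Finset.sum_add_distrib,
        ite_mul, zero_mul]
      congr 1
      · simp only [Finset.sum_mul]
        rw [Finset.sum_comm]
        simp [Finset.mul_sum, mul_assoc]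
      · simp
    calc ∑ a, x a * Sx.mulVec y a
        = ∑ a, ((∑ j, x a * (γ j a * ∑ b, γ j b * y b)) + σ₁ ^ 2 * (x a * y a)) := by
          refine Finset.sum_congr rfl fun a _ => ?_
          rw [h1 a, mul_add, Finset.mul_sum]
          congr 1
          ring
      _ = (∑ j, (∑ a, γ j a * x a) * (∑ b, γ j b * y b)) + σ₁ ^ 2 * ∑ a, x a * y a := by
          rw [Finset.sum_add_distrib, Finset.sum_comm, ← Finset.mul_sum]
          congr 1
          refine Finset.sum_congr rfl fun j _ => ?_
          rw [Finset.sum_mul]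
          refine Finset.sum_congr rfl fun a _ => by ring
  -- orthogonality of Sx-products for distinct loadings
  have hSxorth : ∀ r, r ≠ r0 → ∑ a, u1 r a * Sx.mulVec (u1 r0) a = 0 := by
    intro r hr
    rw [hform]
    have hz : ∀ j : Fin l, (∑ a, γ j a * u1 r a) * (∑ b, γ j b * u1 r0 b) = 0 := by
      intro j
      by_cases hjr : j ∈ S r
      · have : j ∉ S r0 := fun h => (hdisj r r0 hr).ne_of_mem hjr h rfl
        rw [hkey r0 j this, mul_zero]
      · rw [hkey r j hjr, zero_mul]
    rw [Finset.sum_congr rfl fun j _ => hz j, Finset.sum_const_zero, ho1 r r0 hr]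
    ring
  -- value of c
  have hc' : c = (∑ j, (∑ a, γ j a * u1 r0 a) ^ 2) + σ₁ ^ 2 := by
    rw [hc, hq, hform]
    have : ∑ a, u1 r0 a * u1 r0 a = 1 := by
      simpa [pow_two] using hu1 r0
    rw [this, mul_one]
    congr 1
    exact Finset.sum_congr rfl fun j _ => (sq _).symm
  have hσc : σ₁ ^ 2 ≤ c := by
    rw [hc']
    have : 0 ≤ ∑ j, (∑ a, γ j a * u1 r0 a) ^ 2 :=
      Finset.sum_nonneg fun j _ => sq_nonneg _
    linarith
  refine ⟨hσc, ?_, ?_⟩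
  · -- deflated tensor formula
    intro i j k
    have hqT : ∀ j k, (∑ i', q i' * T i' j k) = θ r0 * (u2 r0 j * u3 r0 k) := by
      intro j k
      simp only [hT, Finset.mul_sum]
      rw [Finset.sum_comm]
      have hterm : ∀ r : Fin R,
          (∑ i', q i' * (θ r * (u1 r i' * u2 r j * u3 r k)))
            = (if r = r0 then θ r0 * (u2 r0 j * u3 r0 k) else 0) := by
        intro r
        by_cases hr : r = r0
        · have h11 : ∑ i', u1 r0 i' * u1 r0 i' = 1 := by simpa [pow_two] using hu1 r0
          rw [if_pos hr, hr, hq]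
          calc ∑ i', u1 r0 i' * (θ r0 * (u1 r0 i' * u2 r0 j * u3 r0 k))
              = (∑ i', u1 r0 i' * u1 r0 i') * (θ r0 * (u2 r0 j * u3 r0 k)) := by
                rw [Finset.sum_mul]
                exact Finset.sum_congr rfl fun i' _ => by ring
            _ = θ r0 * (u2 r0 j * u3 r0 k) := by rw [h11, one_mul]
        · simp only [if_neg hr, hq]
          calc ∑ i', u1 r0 i' * (θ r * (u1 r i' * u2 r j * u3 r k))
              = (∑ i', u1 r0 i' * u1 r i') * (θ r * (u2 r j * u3 r k)) := by
                rw [Finset.sum_mul]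
                exact Finset.sum_congr rfl fun i' _ => by ring
            _ = 0 := by rw [ho1 r0 r (fun h => hr h.symm), zero_mul]
      rw [Finset.sum_congr rfl fun r _ => hterm r]
      simp
    have hsplit : (∑ r, θ r * (u1 r i * u2 r j * u3 r k))
        = θ r0 * (u1 r0 i * u2 r0 j * u3 r0 k)
          + ∑ r ∈ Finset.univ.filter (fun r => r ≠ r0),
              θ r * (u1 r i * u2 r j * u3 r k) := by
      rw [← Finset.sum_filter_add_sum_filter_not Finset.univ (fun r => r = r0)]
      congr 1
      rw [Finset.filter_eq']
      simp
    have hsum : ∑ i', (Sx.mulVec q i * c⁻¹ * q i') * T i' j k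
        = Sx.mulVec q i * c⁻¹ * (θ r0 * (u2 r0 j * u3 r0 k)) := by
      rw [← hqT j k, Finset.mul_sum]
      exact Finset.sum_congr rfl fun i' _ => by ring
    rw [hT' i j k, hsum, hT, hsplit, hv]
    simp only [hq]
    ring
  · -- orthogonality of v to other loadings
    intro r hr
    have h1 : ∑ i, u1 r0 i * u1 r i = 0 := ho1 r0 r (fun h => hr h.symm)
    have h2 := hSxorth r hr
    rw [hv]
    simp only [sub_mul, Finset.sum_sub_distrib]
    rw [h1]
    have : ∑ i, c⁻¹ * Sx.mulVec (u1 r0) i * u1 r i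
        = c⁻¹ * ∑ i, u1 r i * Sx.mulVec (u1 r0) i := by
      rw [Finset.mul_sum]
      exact Finset.sum_congr rfl fun i _ => by ring
    rw [this, h2, mul_zero, sub_zero]
end

section
/- Let T = sum_{r=1}^R theta_r (u_{1r} o u_{2r} o u_{3r}) in R^{d_1 x d_2 x d_3} be orthogonally decomposable with theta_1 >= theta_2 >= ... >= theta_R > 0, R >= 2, unit vectors u_{mr}, and u_{mr}^T u_{ms} = 0 for r != s in each mode. Let q_2 in R^{d_2}, q_3 in R^{d_3} be unit vectors and delta >= 0 such that |u_{2r}^T q_2| <= delta and |u_{3r}^T q_3| <= delta for every r >= 2. Then for every coordinate i in [d_1], |(T x_2 q_2^T x_3 q_3^T)_i - theta_1 (u_{21}^T q_2)(u_{31}^T q_3) u_{11,i}| <= theta_2 delta^2 sqrt(R - 1), where (T x_2 q_2^T x_3 q_3^T)_i = sum_{j,k} T_{ijk} q_{2,j} q_{3,k}. -/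
lemma col_sq_le_one {R d : ℕ} (u : Fin R → Fin d → ℝ) (hu : ∀ r, ∑ i, u r i ^ 2 = 1)
    (ho : ∀ r s, r ≠ s → ∑ i, u r i * u s i = 0) (i : Fin d) :
    ∑ r, u r i ^ 2 ≤ 1 := by
  have hkey : ∑ i', (∑ r, u r i * u r i') ^ 2 = ∑ r, u r i ^ 2 := by
    simp only [sq, Finset.sum_mul_sum]
    rw [Finset.sum_comm]
    refine Finset.sum_congr rfl fun r _ => ?_
    rw [Finset.sum_comm]
    have : ∀ s : Fin R, ∑ i', (u r i * u r i') * (u s i * u s i')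
        = (u r i * u s i) * ∑ i', u r i' * u s i' := by
      intro s; rw [Finset.mul_sum]; exact Finset.sum_congr rfl fun _ _ => by ring
    simp only [this]
    rw [Finset.sum_eq_single r]
    · simp only [← sq, hu]; ring
    · intro s _ hs; rw [ho r s (Ne.symm hs)]; ring
    · simp
  set x := ∑ r, u r i ^ 2 with hx
  have hx0 : 0 ≤ x := Finset.sum_nonneg fun _ _ => sq_nonneg _
  have hdiag : (∑ r, u r i * u r i) ^ 2 ≤ ∑ i', (∑ r, u r i * u r i') ^ 2 :=
    Finset.single_le_sum (f := fun i' => (∑ r, u r i * u r i')^2) (fun _ _ => sq_nonneg _) (Finset.mem_univ i)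
  have h1 : x ^ 2 ≤ x := by
    have : (∑ r, u r i * u r i) = x := by rw [hx]; exact Finset.sum_congr rfl fun _ _ => (sq _).symm
    rw [this, hkey] at hdiag; exact hdiag
  nlinarith

/-- Perturbation bound behind Step 4 of the active-set finding algorithm:
for an odeco tensor `T = ∑_r θ_r (u_{1r} ∘ u_{2r} ∘ u_{3r})` with
`θ₁ ≥ θ₂ ≥ ⋯ ≥ θ_R > 0`, `R ≥ 2`, and unit vectors `q₂, q₃` nearly orthogonal
to all non-leading mode-2 and mode-3 loadings (`|u_{2r}ᵀq₂| ≤ δ`,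
`|u_{3r}ᵀq₃| ≤ δ` for `r ≥ 2`), the contraction `T ×₂ q₂ᵀ ×₃ q₃ᵀ` is entrywise
within `θ₂ δ² √(R-1)` of `θ₁ (u_{21}ᵀq₂)(u_{31}ᵀq₃) u_{11}`. -/
theorem stmt_13 {d1 d2 d3 R : ℕ} (hR : 2 ≤ R)
    (θ : Fin R → ℝ) (hθpos : ∀ r, 0 < θ r)
    (hθmono : ∀ r s : Fin R, r ≤ s → θ s ≤ θ r)
    (u1 : Fin R → Fin d1 → ℝ) (u2 : Fin R → Fin d2 → ℝ) (u3 : Fin R → Fin d3 → ℝ)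
    (hu1 : ∀ r, ∑ i, u1 r i ^ 2 = 1)
    (hu2 : ∀ r, ∑ j, u2 r j ^ 2 = 1)
    (hu3 : ∀ r, ∑ k, u3 r k ^ 2 = 1)
    (ho1 : ∀ r s, r ≠ s → ∑ i, u1 r i * u1 s i = 0)
    (ho2 : ∀ r s, r ≠ s → ∑ j, u2 r j * u2 s j = 0)
    (ho3 : ∀ r s, r ≠ s → ∑ k, u3 r k * u3 s k = 0)
    (T : Fin d1 → Fin d2 → Fin d3 → ℝ)
    (hT : ∀ i j k, T i j k = ∑ r, θ r * (u1 r i * u2 r j * u3 r k))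
    (q2 : Fin d2 → ℝ) (q3 : Fin d3 → ℝ)
    (hq2 : ∑ j, q2 j ^ 2 = 1) (hq3 : ∑ k, q3 k ^ 2 = 1)
    (δ : ℝ) (hδ : 0 ≤ δ)
    (h2 : ∀ r : Fin R, r ≠ ⟨0, by omega⟩ → |∑ j, u2 r j * q2 j| ≤ δ)
    (h3 : ∀ r : Fin R, r ≠ ⟨0, by omega⟩ → |∑ k, u3 r k * q3 k| ≤ δ) :
    ∀ i : Fin d1,
      |(∑ j, ∑ k, T i j k * q2 j * q3 k)
          - θ ⟨0, by omega⟩ * (∑ j, u2 ⟨0, by omega⟩ j * q2 j)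
              * (∑ k, u3 ⟨0, by omega⟩ k * q3 k) * u1 ⟨0, by omega⟩ i|
        ≤ θ ⟨1, hR⟩ * δ ^ 2 * Real.sqrt ((R : ℝ) - 1) := by
  intro i
  have hR0 : (0 : ℕ) < R := by omega
  set r0 : Fin R := ⟨0, hR0⟩ with hr0
  set r1 : Fin R := ⟨1, hR⟩ with hr1
  set A : Fin R → ℝ := fun r => ∑ j, u2 r j * q2 j with hA
  set B : Fin R → ℝ := fun r => ∑ k, u3 r k * q3 k with hB
  -- expansion
  have key : (∑ j, ∑ k, T i j k * q2 j * q3 k)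
      = ∑ r, θ r * u1 r i * A r * B r := by
    have step : ∀ j, ∑ k, T i j k * q2 j * q3 k
        = ∑ r, θ r * u1 r i * (u2 r j * q2 j) * B r := by
      intro j
      have : ∀ k, T i j k * q2 j * q3 k
          = ∑ r, θ r * u1 r i * (u2 r j * q2 j) * (u3 r k * q3 k) := by
        intro k
        rw [hT, Finset.sum_mul, Finset.sum_mul]
        exact Finset.sum_congr rfl fun r _ => by ring
      simp only [this]
      rw [Finset.sum_comm]
      refine Finset.sum_congr rfl fun r _ => ?_
      rw [hB, Finset.mul_sum]
    simp only [step]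
    rw [Finset.sum_comm]
    refine Finset.sum_congr rfl fun r _ => ?_
    simp only [hA, Finset.mul_sum, Finset.sum_mul]
  rw [key]
  have hsplit : ∑ r, θ r * u1 r i * A r * B r
      = θ r0 * u1 r0 i * A r0 * B r0 + ∑ r ∈ Finset.univ.erase r0, θ r * u1 r i * A r * B r := by
    exact (Finset.add_sum_erase _ (fun r => θ r * u1 r i * A r * B r) (Finset.mem_univ r0)).symm
  rw [hsplit]
  have heq : θ r0 * u1 r0 i * A r0 * B r0 +
      (∑ r ∈ Finset.univ.erase r0, θ r * u1 r i * A r * B r) -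
      θ r0 * A r0 * B r0 * u1 r0 i
      = ∑ r ∈ Finset.univ.erase r0, θ r * u1 r i * A r * B r := by ring
  rw [heq]
  -- bound each term
  have hθ1 : 0 < θ r1 := hθpos r1
  have hterm : ∀ r ∈ Finset.univ.erase r0,
      |θ r * u1 r i * A r * B r| ≤ θ r1 * δ ^ 2 * |u1 r i| := by
    intro r hr
    have hrne : r ≠ r0 := Finset.ne_of_mem_erase hr
    have hr1le : r1 ≤ r := by
      have : r.val ≠ 0 := fun h => hrne (Fin.ext h)
      exact Fin.mk_le_of_le_val (by omega)
    have hθle : θ r ≤ θ r1 := hθmono r1 r hr1le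
    have hA' : |A r| ≤ δ := h2 r hrne
    have hB' : |B r| ≤ δ := h3 r hrne
    have : |θ r * u1 r i * A r * B r| = θ r * |u1 r i| * |A r| * |B r| := by
      rw [abs_mul, abs_mul, abs_mul, abs_of_pos (hθpos r)]
    rw [this]
    calc θ r * |u1 r i| * |A r| * |B r| ≤ θ r1 * |u1 r i| * δ * δ := by
          apply mul_le_mul
          apply mul_le_mul
          exact mul_le_mul hθle le_rfl (abs_nonneg _) hθ1.le
          exact hA'
          exact abs_nonneg _
          positivity
          exact hB'
          exact abs_nonneg _
          positivity
      _ = θ r1 * δ ^ 2 * |u1 r i| := by ring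
  have habs : |∑ r ∈ Finset.univ.erase r0, θ r * u1 r i * A r * B r|
      ≤ ∑ r ∈ Finset.univ.erase r0, θ r1 * δ ^ 2 * |u1 r i| :=
    (Finset.abs_sum_le_sum_abs _ _).trans (Finset.sum_le_sum hterm)
  refine habs.trans ?_
  rw [← Finset.mul_sum]
  -- Cauchy-Schwarz: ∑_{r≠r0} |u1 r i| ≤ sqrt(R-1)
  have hcs : ∑ r ∈ Finset.univ.erase r0, |u1 r i| ≤ Real.sqrt ((R : ℝ) - 1) := by
    have h1 : (∑ r ∈ Finset.univ.erase r0, 1 * |u1 r i|) ^ 2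
        ≤ (∑ r ∈ Finset.univ.erase r0, (1:ℝ) ^ 2) * ∑ r ∈ Finset.univ.erase r0, |u1 r i| ^ 2 :=
      Finset.sum_mul_sq_le_sq_mul_sq _ _ _
    have hcard : (∑ r ∈ Finset.univ.erase r0, (1:ℝ) ^ 2) = (R : ℝ) - 1 := by
      simp [Finset.card_erase_of_mem]
      push_cast [Nat.cast_sub (by omega : 1 ≤ R)]
      ring
    have hle1 : ∑ r ∈ Finset.univ.erase r0, |u1 r i| ^ 2 ≤ 1 := by
      calc ∑ r ∈ Finset.univ.erase r0, |u1 r i| ^ 2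
          ≤ ∑ r, |u1 r i| ^ 2 :=
            Finset.sum_le_sum_of_subset_of_nonneg (Finset.subset_univ _)
              (fun _ _ _ => sq_nonneg _)
        _ = ∑ r, u1 r i ^ 2 := by simp [sq_abs]
        _ ≤ 1 := col_sq_le_one u1 hu1 ho1 i
    simp only [one_mul] at h1
    rw [hcard] at h1
    have hRm1 : (0:ℝ) ≤ (R : ℝ) - 1 := by
      have : (2:ℝ) ≤ (R:ℝ) := by exact_mod_cast hR
      linarith
    have h2' : (∑ r ∈ Finset.univ.erase r0, |u1 r i|) ^ 2 ≤ (R : ℝ) - 1 := by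
      calc (∑ r ∈ Finset.univ.erase r0, |u1 r i|) ^ 2
          ≤ ((R : ℝ) - 1) * ∑ r ∈ Finset.univ.erase r0, |u1 r i| ^ 2 := h1
        _ ≤ ((R : ℝ) - 1) * 1 := by
            exact mul_le_mul_of_nonneg_left hle1 hRm1
        _ = (R : ℝ) - 1 := mul_one _
    have hnn : 0 ≤ ∑ r ∈ Finset.univ.erase r0, |u1 r i| :=
      Finset.sum_nonneg fun _ _ => abs_nonneg _
    nlinarith [Real.sq_sqrt hRm1, Real.sqrt_nonneg ((R:ℝ) - 1),
      sq_nonneg (∑ r ∈ Finset.univ.erase r0, |u1 r i| - Real.sqrt ((R:ℝ) - 1))]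
  calc θ r1 * δ ^ 2 * ∑ r ∈ Finset.univ.erase r0, |u1 r i|
      ≤ θ r1 * δ ^ 2 * Real.sqrt ((R : ℝ) - 1) := by
        apply mul_le_mul_of_nonneg_left hcs; positivity
end
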